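/- arXiv:1506.05982 — 2 statements merged into one kernel-verified Lean document; each statement's English description precedes it below -/
import Mathlib

section
/- Let A be a closed and geodesically convex subset of the l∞ plane ℝ²_∞ and let p = (p₁,p₂) ∉ A be a point such that the three sectors S₁^+(p), S₂^+(p), S₂^−(p) all intersect A. Then the horizontal ray {(p₁ + t, p₂) : t ≥ 0} intersects A; and if t₀ is the minimal such t and q = (p₁ + t₀, p₂), then d∞(a, q) ≤ d∞(a, p) for every a ∈ A. -/
/-- A geodesic from `p` to `q` in a metric space: an isometric embedding of the
real interval `[0, dist p q]` sending `0` to `p` and `dist p q` to `q`. -/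
def IsGeodesic {X : Type*} [MetricSpace X] (p q : X) (γ : ℝ → X) : Prop :=
  γ 0 = p ∧ γ (dist p q) = q ∧
    ∀ s ∈ Set.Icc (0 : ℝ) (dist p q), ∀ t ∈ Set.Icc (0 : ℝ) (dist p q),
      dist (γ s) (γ t) = |s - t|

/-- A subset `A` is geodesically convex if any two of its points are joined by a
geodesic of the ambient space whose image lies in `A`. -/
def GeodConvex {X : Type*} [MetricSpace X] (A : Set X) : Prop :=
  ∀ p ∈ A, ∀ q ∈ A, ∃ γ : ℝ → X, IsGeodesic p q γ ∧
    ∀ t ∈ Set.Icc (0 : ℝ) (dist p q), γ t ∈ A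

/-- The sector `S₁^ε(p)` in the `l∞` plane: points `q` with `d∞(p,q) = ε(q₁ − p₁)`. -/
def sector1 (ε : ℝ) (p : ℝ × ℝ) : Set (ℝ × ℝ) :=
  {q | dist p q = ε * (q.1 - p.1)}

/-- The sector `S₂^ε(p)` in the `l∞` plane: points `q` with `d∞(p,q) = ε(q₂ − p₂)`. -/
def sector2 (ε : ℝ) (p : ℝ × ℝ) : Set (ℝ × ℝ) :=
  {q | dist p q = ε * (q.2 - p.2)}

/-!
In the coordinates `σ = x₁ + x₂`, `δ = x₁ − x₂` the `l∞` metric is half the `l¹` metric, so a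
point metrically between `x` and `z` has `σ` and `δ` between those of `x` and `z`, and the four
sectors of `p` become the four closed quadrants around `p`. Following a geodesic in `A` until it
crosses a level line of `σ`, `δ` or `x₂` (intermediate value theorem) thus produces points of `A`
with controlled coordinates. Three such crossings show that a geodesically convex set meeting all
four sectors of `p` contains `p`. Since `p ∉ A`, the set `A` meets the horizontal line through `p`
only to the right of `p`, and it does meet it, on a geodesic from a point of `S₂^−(p)` to one of
`S₂^+(p)`. For `a ∈ A`, the geodesic from `a` to the point of `S₂^±(p)` on the other side of the
line crosses it at some `z` with `d(a, z) ≤ d(a, p)`; as `z` lies to the right of `q`, the point `q`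
lies between `p` and `z` and `d(a, q) ≤ max (d(a, p)) (d(a, z))`.
-/

open Set

theorem GeodConvex.exists_mem_dist_add_dist_eq {X : Type*} [MetricSpace X] {A : Set X}
    (hA : GeodConvex A) {φ : X → ℝ} (hφ : Continuous φ) {x y : X} (hx : x ∈ A) (hy : y ∈ A)
    {c : ℝ} (hc : c ∈ uIcc (φ x) (φ y)) :
    ∃ z ∈ A, φ z = c ∧ dist x z + dist z y = dist x y := by
  obtain ⟨γ, ⟨hγ0, hγD, hiso⟩, hγA⟩ := hA x hx y hy
  have hD : uIcc 0 (dist x y) = Icc 0 (dist x y) := uIcc_of_le dist_nonneg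
  have hγ : ContinuousOn γ (Icc 0 (dist x y)) :=
    (LipschitzOnWith.of_dist_le_mul (K := 1) fun s hs t ht => by
      simp [hiso s hs t ht, Real.dist_eq]).continuousOn
  obtain ⟨t, ht, hφt⟩ := intermediate_value_uIcc (f := φ ∘ γ) (a := 0) (b := dist x y)
    (hD ▸ hφ.comp_continuousOn hγ) (by simpa [Function.comp, hγ0, hγD] using hc)
  rw [hD] at ht
  refine ⟨γ t, hγA t ht, hφt, ?_⟩
  have h₁ : dist x (γ t) = t := by
    rw [← hγ0, hiso 0 ⟨le_rfl, dist_nonneg⟩ t ht, zero_sub, abs_neg, abs_of_nonneg ht.1]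
  have h₂ : dist (γ t) y = dist x y - t :=
    calc dist (γ t) y = dist (γ t) (γ (dist x y)) := by rw [hγD]
      _ = dist x y - t := by
        rw [hiso t ht _ ⟨dist_nonneg, le_rfl⟩, abs_of_nonpos (by linarith [ht.2])]; ring
  rw [h₁, h₂]
  ring

theorem mem_uIcc_of_abs_sub_add_abs_sub_eq {a b c : ℝ} (h : |a - b| + |b - c| = |a - c|) :
    b ∈ uIcc a c := by
  rw [mem_uIcc]
  rcases abs_cases (a - b) with h1 | h1 <;> rcases abs_cases (b - c) with h2 | h2 <;>
    rcases abs_cases (a - c) with h3 | h3 <;>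
    first | (left; constructor <;> linarith) | (right; constructor <;> linarith)

theorem max_abs_abs_eq_half (a b : ℝ) : max |a| |b| = (|a + b| + |a - b|) / 2 := by
  rcases abs_cases a with h1 | h1 <;> rcases abs_cases b with h2 | h2 <;>
    rcases abs_cases (a + b) with h3 | h3 <;> rcases abs_cases (a - b) with h4 | h4 <;>
    first | (rw [max_eq_left (by linarith)]; linarith) | (rw [max_eq_right (by linarith)]; linarith)

namespace LinftyPlane

theorem dist_eq_half (x y : ℝ × ℝ) :
    dist x y = (|(x.1 + x.2) - (y.1 + y.2)| + |(x.1 - x.2) - (y.1 - y.2)|) / 2 := by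
  rw [Prod.dist_eq, Real.dist_eq, Real.dist_eq, max_abs_abs_eq_half]
  ring_nf

theorem mem_uIcc_of_dist_add_dist_eq {x y z : ℝ × ℝ} (h : dist x y + dist y z = dist x z) :
    y.1 + y.2 ∈ uIcc (x.1 + x.2) (z.1 + z.2) ∧ y.1 - y.2 ∈ uIcc (x.1 - x.2) (z.1 - z.2) := by
  simp only [dist_eq_half] at h
  have hσ := abs_sub_le (x.1 + x.2) (y.1 + y.2) (z.1 + z.2)
  have hδ := abs_sub_le (x.1 - x.2) (y.1 - y.2) (z.1 - z.2)
  exact ⟨mem_uIcc_of_abs_sub_add_abs_sub_eq (by linarith),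
    mem_uIcc_of_abs_sub_add_abs_sub_eq (by linarith)⟩

variable {A : Set (ℝ × ℝ)} {p : ℝ × ℝ}

theorem mem_of_mem_of_mem_diagonal (hA : GeodConvex A) {y₁ y₂ : ℝ × ℝ} (h₁ : y₁ ∈ A)
    (h₂ : y₂ ∈ A) (hδ₁ : y₁.1 - y₁.2 = p.1 - p.2) (hδ₂ : y₂.1 - y₂.2 = p.1 - p.2)
    (hσ : p.1 + p.2 ∈ uIcc (y₁.1 + y₁.2) (y₂.1 + y₂.2)) : p ∈ A := by
  obtain ⟨y, hyA, hσy, hy⟩ :=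
    hA.exists_mem_dist_add_dist_eq (φ := fun x => x.1 + x.2) (by fun_prop) h₁ h₂ hσ
  have hδy := (mem_uIcc_of_dist_add_dist_eq hy).2
  rw [hδ₁, hδ₂, uIcc_self, mem_singleton_iff] at hδy
  have : y = p := Prod.ext (by linarith) (by linarith)
  exact this ▸ hyA

theorem mem_of_mem_antidiagonal (hA : GeodConvex A) {z c u : ℝ × ℝ} (hz : z ∈ A)
    (hc : c ∈ A) (hu : u ∈ A) (hσz : z.1 + z.2 = p.1 + p.2)
    (hσc : c.1 + c.2 ≤ p.1 + p.2) (hσu : p.1 + p.2 ≤ u.1 + u.2)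
    (hδc : p.1 - p.2 ∈ uIcc (z.1 - z.2) (c.1 - c.2))
    (hδu : p.1 - p.2 ∈ uIcc (z.1 - z.2) (u.1 - u.2)) : p ∈ A := by
  obtain ⟨y₁, hy₁A, hδ₁, hy₁⟩ :=
    hA.exists_mem_dist_add_dist_eq (φ := fun x => x.1 - x.2) (by fun_prop) hz hc hδc
  obtain ⟨y₂, hy₂A, hδ₂, hy₂⟩ :=
    hA.exists_mem_dist_add_dist_eq (φ := fun x => x.1 - x.2) (by fun_prop) hz hu hδu
  have hσ₁ := (mem_uIcc_of_dist_add_dist_eq hy₁).1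
  have hσ₂ := (mem_uIcc_of_dist_add_dist_eq hy₂).1
  rw [hσz, uIcc_of_ge hσc] at hσ₁
  rw [hσz, uIcc_of_le hσu] at hσ₂
  exact mem_of_mem_of_mem_diagonal hA hy₁A hy₂A hδ₁ hδ₂
    (mem_uIcc.mpr (Or.inl ⟨hσ₁.2, hσ₂.1⟩))

theorem mem_of_meets_four_quadrants (hA : GeodConvex A) {b u c d : ℝ × ℝ}
    (hb : b ∈ A) (hu : u ∈ A) (hc : c ∈ A) (hd : d ∈ A)
    (hσb : p.1 + p.2 ≤ b.1 + b.2) (hδb : p.1 - p.2 ≤ b.1 - b.2)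
    (hσu : p.1 + p.2 ≤ u.1 + u.2) (hδu : u.1 - u.2 ≤ p.1 - p.2)
    (hσc : c.1 + c.2 ≤ p.1 + p.2) (hδc : c.1 - c.2 ≤ p.1 - p.2)
    (hσd : d.1 + d.2 ≤ p.1 + p.2) (hδd : p.1 - p.2 ≤ d.1 - d.2) : p ∈ A := by
  obtain ⟨z, hzA, hσz, -⟩ := hA.exists_mem_dist_add_dist_eq (φ := fun x => x.1 + x.2)
    (by fun_prop) hc hb (mem_uIcc.mpr (Or.inl ⟨hσc, hσb⟩))
  -- `z` is on the antidiagonal through `p`; on whichever side of the diagonal it lies, two of the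
  -- given points lie on the other side, one on each side of the antidiagonal.
  rcases le_total (p.1 - p.2) (z.1 - z.2) with hδz | hδz
  · exact mem_of_mem_antidiagonal hA hzA hc hu hσz hσc hσu
      (mem_uIcc.mpr (Or.inr ⟨hδc, hδz⟩)) (mem_uIcc.mpr (Or.inr ⟨hδu, hδz⟩))
  · exact mem_of_mem_antidiagonal hA hzA hd hb hσz hσd hσb
      (mem_uIcc.mpr (Or.inl ⟨hδz, hδd⟩)) (mem_uIcc.mpr (Or.inl ⟨hδz, hδb⟩))

theorem dist_le_max_of_fst_mem_Icc (a : ℝ × ℝ) {x y z : ℝ × ℝ} (hx : x.2 = y.2) (hz : z.2 = y.2)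
    (hy : y.1 ∈ Icc x.1 z.1) : dist a y ≤ max (dist a x) (dist a z) := by
  simp only [Prod.dist_eq, Real.dist_eq, hx, hz]
  rw [max_max_max_comm, max_self, max_comm (|a.1 - x.1|)]
  exact max_le_max (abs_le_max_abs_abs (by linarith [hy.2]) (by linarith [hy.1])) le_rfl

theorem quadrant_of_mem_sector1_one {q : ℝ × ℝ} (hq : q ∈ sector1 1 p) :
    p.1 + p.2 ≤ q.1 + q.2 ∧ p.1 - p.2 ≤ q.1 - q.2 := by
  have h : dist p q = 1 * (q.1 - p.1) := hq
  rw [Prod.dist_eq, Real.dist_eq, Real.dist_eq] at h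
  have h2 := abs_le.mp ((le_max_right _ _).trans h.le)
  constructor <;> linarith

theorem quadrant_of_mem_sector2_one {q : ℝ × ℝ} (hq : q ∈ sector2 1 p) :
    p.1 + p.2 ≤ q.1 + q.2 ∧ q.1 - q.2 ≤ p.1 - p.2 := by
  have h : dist p q = 1 * (q.2 - p.2) := hq
  rw [Prod.dist_eq, Real.dist_eq, Real.dist_eq] at h
  have h1 := abs_le.mp ((le_max_left _ _).trans h.le)
  constructor <;> linarith

theorem quadrant_of_mem_sector2_neg_one {q : ℝ × ℝ} (hq : q ∈ sector2 (-1) p) :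
    q.1 + q.2 ≤ p.1 + p.2 ∧ p.1 - p.2 ≤ q.1 - q.2 := by
  have h : dist p q = -1 * (q.2 - p.2) := hq
  rw [Prod.dist_eq, Real.dist_eq, Real.dist_eq] at h
  have h1 := abs_le.mp ((le_max_left _ _).trans h.le)
  constructor <;> linarith

theorem dist_le_dist_of_mem_sector2 {ε : ℝ} (hε : |ε| ≤ 1) {w z : ℝ × ℝ} (hw : w ∈ sector2 ε p)
    (hz : z.2 = p.2) : dist p w ≤ dist z w :=
  calc dist p w = ε * (w.2 - p.2) := hw
    _ ≤ |ε| * |z.2 - w.2| := by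
      rw [hz, abs_sub_comm, ← abs_mul]; exact le_abs_self _
    _ ≤ dist z w := by
      rw [Prod.dist_eq, Real.dist_eq]
      exact mul_le_of_le_one_left (abs_nonneg _) hε |>.trans (le_max_right _ _)

theorem exists_mem_snd_eq_dist_le (hA : GeodConvex A) {a w : ℝ × ℝ} (ha : a ∈ A) (hw : w ∈ A)
    {ε : ℝ} (hε : |ε| ≤ 1) (hwp : w ∈ sector2 ε p) (h : p.2 ∈ uIcc a.2 w.2) :
    ∃ z ∈ A, z.2 = p.2 ∧ dist a z ≤ dist a p := by
  obtain ⟨z, hzA, hz, hazw⟩ := hA.exists_mem_dist_add_dist_eq continuous_snd ha hw h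
  refine ⟨z, hzA, hz, ?_⟩
  linarith [dist_triangle a p w, dist_le_dist_of_mem_sector2 hε hwp hz]

theorem lt_fst_of_mem_sectors (hA : GeodConvex A) (hp : p ∉ A) {b u d : ℝ × ℝ}
    (hb : b ∈ sector1 1 p ∩ A) (hu : u ∈ sector2 1 p ∩ A) (hd : d ∈ sector2 (-1) p ∩ A)
    {z : ℝ × ℝ} (hz : z ∈ A) (hz₂ : z.2 = p.2) : p.1 < z.1 := by
  by_contra! h
  obtain ⟨hσb, hδb⟩ := quadrant_of_mem_sector1_one hb.1
  obtain ⟨hσu, hδu⟩ := quadrant_of_mem_sector2_one hu.1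
  obtain ⟨hσd, hδd⟩ := quadrant_of_mem_sector2_neg_one hd.1
  exact hp (mem_of_meets_four_quadrants hA hb.2 hu.2 hz hd.2 hσb hδb hσu hδu
    (by linarith) (by linarith) hσd hδd)

end LinftyPlane

open LinftyPlane in
/-- Three-sectors case: if `A ⊆ ℝ²_∞` is closed and geodesically convex,
`p ∉ A`, and the sectors `S₁^+(p)`, `S₂^+(p)`, `S₂^−(p)` all meet `A`, then the
horizontal ray to the right of `p` meets `A`, and its first intersection point
`q = (p₁ + t₀, p₂)` satisfies `d∞(a,q) ≤ d∞(a,p)` for all `a ∈ A`. -/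
theorem three_sectors_case (A : Set (ℝ × ℝ)) (hcl : IsClosed A) (hgc : GeodConvex A)
    (p : ℝ × ℝ) (hp : p ∉ A)
    (h1p : (sector1 1 p ∩ A).Nonempty)
    (h2p : (sector2 1 p ∩ A).Nonempty) (h2m : (sector2 (-1) p ∩ A).Nonempty) :
    ∃ t₀ : ℝ, IsLeast {t : ℝ | 0 ≤ t ∧ (p.1 + t, p.2) ∈ A} t₀ ∧
      ∀ a ∈ A, dist a (p.1 + t₀, p.2) ≤ dist a p := by
  obtain ⟨b, hb⟩ := h1p
  obtain ⟨u, hu⟩ := h2p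
  obtain ⟨d, hd⟩ := h2m
  have hright : ∀ z ∈ A, z.2 = p.2 → p.1 < z.1 := fun _ hz hz₂ =>
    lt_fst_of_mem_sectors hgc hp hb hu hd hz hz₂
  have hu₂ : p.2 ≤ u.2 := by linarith [quadrant_of_mem_sector2_one hu.1]
  have hd₂ : d.2 ≤ p.2 := by linarith [quadrant_of_mem_sector2_neg_one hd.1]
  set T := {t : ℝ | 0 ≤ t ∧ (p.1 + t, p.2) ∈ A}
  have hmemT : ∀ z ∈ A, z.2 = p.2 → z.1 - p.1 ∈ T := fun z hz hz₂ =>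
    ⟨by linarith [hright z hz hz₂], by simpa [← hz₂] using hz⟩
  have hTne : T.Nonempty := by
    obtain ⟨z, hzA, hz₂, -⟩ := hgc.exists_mem_dist_add_dist_eq continuous_snd hd.2 hu.2
      (mem_uIcc.mpr (Or.inl ⟨hd₂, hu₂⟩))
    exact ⟨_, hmemT z hzA hz₂⟩
  have hT : IsLeast T (sInf T) :=
    ((isClosed_le continuous_const continuous_id).inter
      (hcl.preimage (by fun_prop))).isLeast_csInf hTne ⟨0, fun t ht => ht.1⟩
  refine ⟨sInf T, hT, fun a ha => ?_⟩
  obtain ⟨z, hzA, hz₂, hz⟩ : ∃ z ∈ A, z.2 = p.2 ∧ dist a z ≤ dist a p := by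
    rcases le_total a.2 p.2 with ha₂ | ha₂
    · exact exists_mem_snd_eq_dist_le hgc ha hu.2 (by simp) hu.1
        (mem_uIcc.mpr (Or.inl ⟨ha₂, hu₂⟩))
    · exact exists_mem_snd_eq_dist_le hgc ha hd.2 (by simp) hd.1
        (mem_uIcc.mpr (Or.inr ⟨hd₂, ha₂⟩))
  have hqz := hT.2 (hmemT z hzA hz₂)
  calc dist a (p.1 + sInf T, p.2) ≤ max (dist a p) (dist a z) :=
        dist_le_max_of_fst_mem_Icc a rfl hz₂ ⟨by linarith [hT.1.1], by dsimp only; linarith⟩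
    _ = dist a p := max_eq_left hz
end

section
/- The l∞ plane ℝ²_∞ is hyperconvex: for every collection (x_i)_{i∈I} of points of ℝ²_∞ and every collection (r_i)_{i∈I} of nonnegative real numbers satisfying d∞(x_i, x_j) ≤ r_i + r_j for all i, j ∈ I, the intersection ⋂_{i∈I} {x ∈ ℝ² : d∞(x_i, x) ≤ r_i} is nonempty. -/
/-! On the line, pairwise intersecting closed intervals `[x i - r i, x i + r i]` have a common
point, the supremum of their left endpoints. In a product with the max metric a point lies in a
ball exactly when each coordinate lies in the corresponding coordinate ball, so hyperconvexity
passes to products and the `l∞` plane `ℝ × ℝ` inherits it from `ℝ`. -/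

open Metric Set

universe u v w

def Hyperconvex (X : Type v) [PseudoMetricSpace X] : Prop :=
  ∀ (ι : Type u) (x : ι → X) (r : ι → ℝ), (∀ i, 0 ≤ r i) →
    (∀ i j, dist (x i) (x j) ≤ r i + r j) → (⋂ i, closedBall (x i) (r i)).Nonempty

theorem Real.hyperconvex : Hyperconvex.{u} ℝ := by
  intro ι x r _ h
  rcases isEmpty_or_nonempty ι with _ | _
  · simp
  have i₀ : ι := Classical.arbitrary ι
  have h_left_le_right (i j : ι) : x j - r j ≤ x i + r i := by
    linarith [(abs_le.mp (h j i)).2]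
  have hbdd : BddAbove (range fun i => x i - r i) :=
    ⟨x i₀ + r i₀, forall_mem_range.mpr fun j => h_left_le_right i₀ j⟩
  refine ⟨⨆ i, (x i - r i), mem_iInter.mpr fun i => ?_⟩
  rw [Real.closedBall_eq_Icc]
  exact ⟨le_ciSup hbdd i, ciSup_le fun j => h_left_le_right i j⟩

theorem Hyperconvex.prod {X : Type v} {Y : Type w} [PseudoMetricSpace X] [PseudoMetricSpace Y]
    (hX : Hyperconvex.{u} X) (hY : Hyperconvex.{u} Y) : Hyperconvex.{u} (X × Y) := by
  intro ι x r hr h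
  obtain ⟨c₁, hc₁⟩ := hX ι (fun i => (x i).1) r hr fun i j =>
    (le_max_left _ _).trans (Prod.dist_eq.symm.trans_le (h i j))
  obtain ⟨c₂, hc₂⟩ := hY ι (fun i => (x i).2) r hr fun i j =>
    (le_max_right _ _).trans (Prod.dist_eq.symm.trans_le (h i j))
  rw [mem_iInter] at hc₁ hc₂
  exact ⟨(c₁, c₂), mem_iInter.mpr fun i => by
    rw [← closedBall_prod_same]
    exact ⟨hc₁ i, hc₂ i⟩⟩

/-- The `l∞` plane `ℝ²_∞` is hyperconvex: any family of closed balls with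
`d∞(x_i, x_j) ≤ r_i + r_j` for all `i, j` has nonempty intersection. -/
theorem linf_plane_hyperconvex (ι : Type) (x : ι → ℝ × ℝ) (r : ι → ℝ)
    (hr : ∀ i, 0 ≤ r i) (h : ∀ i j, dist (x i) (x j) ≤ r i + r j) :
    (⋂ i, {y : ℝ × ℝ | dist (x i) y ≤ r i}).Nonempty := by
  simpa only [closedBall, dist_comm] using Real.hyperconvex.prod Real.hyperconvex ι x r hr h
end
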